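/- arXiv:2003.02659 — 2 statements merged into one kernel-verified Lean document; each statement's English description precedes it below -/
import Mathlib

section
/- Let c, μ ∈ (0,1) with μ < c, and let a_m > 0, G ≥ 0, K ≥ 0, C ≥ 0, R̄ ≥ 0, S̄ ≥ 0. Let V, d, D, e : ℕ → ℝ be sequences such that: V(t) ≥ 0 and D(t) ≥ 0 for all t; V(t+1) ≤ c·V(t) − a_m·d(t) + K for all t; D(t) ≤ d(t) + 3G·e(t) for all t; e(0) ≤ C; and e(τ) ≤ μ^{τ−1} R̄ + S̄ for all τ ≥ 1. Then for every t ≥ 1, min_{0 ≤ τ ≤ t} D(τ) ≤ (c^{t}/(1 − c^{t+1})) · (Q' + R₁) + S, where Q' = (1 − c)(V(0)/a_m + 3 G C), R₁ = (1 − c)·3 G R̄/(c − μ), and S = K/a_m + 3 G S̄. -/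
set_option maxHeartbeats 1000000


/-- Theorem 1 of the paper, case c ≠ μ (deterministic content): linear decay,
up to a constant error `S`, of the running best expected cost gap. -/
theorem main_rate_ne (c μ : ℝ) (hc : c ∈ Set.Ioo (0 : ℝ) 1)
    (hμ : μ ∈ Set.Ioo (0 : ℝ) 1) (hμc : μ < c)
    (am G K C R S : ℝ) (ham : 0 < am) (hG : 0 ≤ G) (hK : 0 ≤ K)
    (hC : 0 ≤ C) (hR : 0 ≤ R) (hS : 0 ≤ S)
    (V d D e : ℕ → ℝ)
    (hV : ∀ t, 0 ≤ V t) (hD : ∀ t, 0 ≤ D t)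
    (hrec : ∀ t, V (t + 1) ≤ c * V t - am * d t + K)
    (hDd : ∀ t, D t ≤ d t + 3 * G * e t)
    (he0 : e 0 ≤ C) (he : ∀ τ : ℕ, 1 ≤ τ → e τ ≤ μ ^ (τ - 1) * R + S)
    (t : ℕ) (ht : 1 ≤ t) :
    (Finset.range (t + 1)).inf' (by simp) D
      ≤ c ^ t / (1 - c ^ (t + 1))
          * ((1 - c) * (V 0 / am + 3 * G * C) + (1 - c) * (3 * G * R) / (c - μ))
        + (K / am + 3 * G * S) := by
  obtain ⟨hc0, hc1⟩ := hc
  obtain ⟨hμ0, hμ1⟩ := hμ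
  have hcm : (0:ℝ) < c - μ := by linarith
  have h1c : (0:ℝ) < 1 - c := by linarith
  have hq1 : c ^ (t + 1) < 1 := pow_lt_one₀ hc0.le hc1 (by omega)
  have hq0 : (0:ℝ) < 1 - c ^ (t + 1) := by linarith
  set m := (Finset.range (t + 1)).inf' (by simp) D with hm
  set S1 : ℝ := ∑ i ∈ Finset.range (t + 1), c ^ i with hS1
  have hS1eq : S1 = (1 - c ^ (t + 1)) / (1 - c) := by
    rw [hS1, geom_sum_eq hc1.ne (t + 1), div_eq_div_iff (by linarith) (by linarith)]
    ring
  have hS1pos : 0 < S1 := by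
    rw [hS1eq]; positivity
  -- the reflected weight sum
  have hrefl : ∑ τ ∈ Finset.range (t + 1), c ^ (t - τ) = S1 := by
    rw [hS1]
    have := Finset.sum_range_reflect (fun i => c ^ i) (t + 1)
    simpa using this
  have hgnn : ∀ τ : ℕ, (0:ℝ) ≤ c ^ (t - τ) := fun τ => pow_nonneg hc0.le _
  -- Step A : bound on the weighted sum of d
  have hA : ∑ τ ∈ Finset.range (t + 1), c ^ (t - τ) * d τ
      ≤ c ^ t * V 0 / am + K / am * S1 := by
    have key : am * ∑ τ ∈ Finset.range (t + 1), c ^ (t - τ) * d τ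
        ≤ c ^ t * V 0 + K * S1 := by
      have h1 : am * ∑ τ ∈ Finset.range (t + 1), c ^ (t - τ) * d τ
          = ∑ τ ∈ Finset.range (t + 1), am * (c ^ (t - τ) * d τ) := by
        rw [Finset.mul_sum]
      have h2 : ∑ τ ∈ Finset.range (t + 1), am * (c ^ (t - τ) * d τ)
          ≤ ∑ τ ∈ Finset.range (t + 1),
              ((c ^ (t + 1 - τ) * V τ - c ^ (t + 1 - (τ + 1)) * V (τ + 1))
                + c ^ (t - τ) * K) := by
        apply Finset.sum_le_sum
        intro τ hτ
        have hτt : τ ≤ t := by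
          simpa [Nat.lt_succ_iff] using Finset.mem_range.mp hτ
        have e1 : t + 1 - τ = (t - τ) + 1 := by omega
        have e2 : t + 1 - (τ + 1) = t - τ := by omega
        rw [e1, e2, pow_succ]
        have hd' : am * d τ ≤ c * V τ - V (τ + 1) + K := by
          have := hrec τ; linarith
        have := mul_le_mul_of_nonneg_left hd' (hgnn τ)
        nlinarith [hgnn τ]
      have h3 : ∑ τ ∈ Finset.range (t + 1),
            ((c ^ (t + 1 - τ) * V τ - c ^ (t + 1 - (τ + 1)) * V (τ + 1))
              + c ^ (t - τ) * K)
          = (c ^ (t + 1) * V 0 - c ^ (t + 1 - (t + 1)) * V (t + 1)) + K * S1 := by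
        rw [Finset.sum_add_distrib,
          Finset.sum_range_sub' (fun τ => c ^ (t + 1 - τ) * V τ) (t + 1),
          ← Finset.sum_mul, hrefl]
        simp only [Nat.sub_zero]
        ring
      have h4 : c ^ (t + 1) * V 0 ≤ c ^ t * V 0 :=
        mul_le_mul_of_nonneg_right
          (pow_le_pow_of_le_one hc0.le hc1.le (Nat.le_succ t)) (hV 0)
      have h5 : (0:ℝ) ≤ c ^ (t + 1 - (t + 1)) * V (t + 1) :=
        mul_nonneg (pow_nonneg hc0.le _) (hV (t + 1))
      calc am * ∑ τ ∈ Finset.range (t + 1), c ^ (t - τ) * d τ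
          = ∑ τ ∈ Finset.range (t + 1), am * (c ^ (t - τ) * d τ) := h1
        _ ≤ _ := h2
        _ = _ := h3
        _ ≤ c ^ t * V 0 + K * S1 := by linarith
    have : c ^ t * V 0 / am + K / am * S1 = (c ^ t * V 0 + K * S1) / am := by
      field_simp
    rw [this, le_div_iff₀ ham, mul_comm]
    exact key
  -- Step B : bound on the weighted sum of e
  have hB : ∑ τ ∈ Finset.range (t + 1), c ^ (t - τ) * e τ
      ≤ C * c ^ t + R * (c ^ t / (c - μ)) + S * S1 := by
    have hsplit : ∑ τ ∈ Finset.range (t + 1), c ^ (t - τ) * e τ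
        = (∑ i ∈ Finset.range t, c ^ (t - (i + 1)) * e (i + 1)) + c ^ t * e 0 := by
      rw [Finset.sum_range_succ' (fun τ => c ^ (t - τ) * e τ) t]
      simp
    rw [hsplit]
    have hb0 : c ^ t * e 0 ≤ C * c ^ t := by
      have := mul_le_mul_of_nonneg_left he0 (pow_nonneg hc0.le t)
      linarith
    have hb1 : ∑ i ∈ Finset.range t, c ^ (t - (i + 1)) * e (i + 1)
        ≤ ∑ i ∈ Finset.range t, (R * (c ^ (t - 1 - i) * μ ^ i) + S * c ^ (t - 1 - i)) := by
      apply Finset.sum_le_sum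
      intro i _
      have he' : e (i + 1) ≤ μ ^ i * R + S := by
        have := he (i + 1) (by omega)
        simpa using this
      have hexp : t - (i + 1) = t - 1 - i := by omega
      rw [hexp]
      have h := mul_le_mul_of_nonneg_left he' (pow_nonneg hc0.le (t - 1 - i))
      nlinarith [h]
    have hb2 : ∑ i ∈ Finset.range t, (R * (c ^ (t - 1 - i) * μ ^ i) + S * c ^ (t - 1 - i))
        = R * (∑ i ∈ Finset.range t, c ^ (t - 1 - i) * μ ^ i)
          + S * ∑ i ∈ Finset.range t, c ^ (t - 1 - i) := by
      rw [Finset.sum_add_distrib, Finset.mul_sum, Finset.mul_sum]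
    have hgeo : ∑ i ∈ Finset.range t, c ^ (t - 1 - i) = ∑ i ∈ Finset.range t, c ^ i :=
      Finset.sum_range_reflect (fun i => c ^ i) t
    have hgeoS1 : ∑ i ∈ Finset.range t, c ^ (t - 1 - i) ≤ S1 := by
      rw [hgeo, hS1, Finset.sum_range_succ]
      nlinarith [pow_nonneg hc0.le t]
    have hmix : ∑ i ∈ Finset.range t, c ^ (t - 1 - i) * μ ^ i ≤ c ^ t / (c - μ) := by
      have hterm : ∀ i ∈ Finset.range t,
          c ^ (t - 1 - i) * μ ^ i = c ^ (t - 1) * (μ / c) ^ i := by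
        intro i hi
        have hi' : i < t := Finset.mem_range.mp hi
        have : μ ^ i = c ^ i * (μ / c) ^ i := by
          rw [← mul_pow]
          congr 1
          field_simp
        rw [this, ← mul_assoc, ← pow_add]
        congr 2
        omega
      rw [Finset.sum_congr rfl hterm, ← Finset.mul_sum]
      have hr1 : μ / c < 1 := (div_lt_one hc0).mpr hμc
      have hr0 : 0 < μ / c := div_pos hμ0 hc0
      have h01 : (0:ℝ) < 1 - μ / c := by linarith
      have hge : ∑ i ∈ Finset.range t, (μ / c) ^ i = (1 - (μ / c) ^ t) / (1 - μ / c) := by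
        rw [geom_sum_eq hr1.ne,
          div_eq_div_iff (sub_ne_zero.mpr hr1.ne) (sub_ne_zero.mpr hr1.ne')]
        ring
      have hgs : ∑ i ∈ Finset.range t, (μ / c) ^ i ≤ 1 / (1 - μ / c) := by
        rw [hge, div_le_div_iff₀ h01 h01]
        nlinarith [mul_pos (pow_pos hr0 t) h01]
      have h1r : 1 / (1 - μ / c) = c / (c - μ) := by
        field_simp
      have hcp : (0:ℝ) ≤ c ^ (t - 1) := pow_nonneg hc0.le _
      have := mul_le_mul_of_nonneg_left hgs hcp
      rw [h1r] at this
      have hct : c ^ (t - 1) * (c / (c - μ)) = c ^ t / (c - μ) := by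
        rw [mul_div_assoc', ← pow_succ]
        congr 2
        omega
      linarith [hct ▸ this]
    calc (∑ i ∈ Finset.range t, c ^ (t - (i + 1)) * e (i + 1)) + c ^ t * e 0
        ≤ (R * (∑ i ∈ Finset.range t, c ^ (t - 1 - i) * μ ^ i)
            + S * ∑ i ∈ Finset.range t, c ^ (t - 1 - i)) + C * c ^ t := by
          rw [← hb2]; linarith
      _ ≤ C * c ^ t + R * (c ^ t / (c - μ)) + S * S1 := by
          nlinarith [mul_le_mul_of_nonneg_left hmix hR,
            mul_le_mul_of_nonneg_left hgeoS1 hS]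
  -- Combine
  have hmD : ∀ τ ∈ Finset.range (t + 1), m ≤ D τ := fun τ hτ => Finset.inf'_le D hτ
  have hstart : m * S1 ≤ ∑ τ ∈ Finset.range (t + 1), c ^ (t - τ) * D τ := by
    rw [← hrefl, Finset.mul_sum]
    apply Finset.sum_le_sum
    intro τ hτ
    rw [mul_comm]
    exact mul_le_mul_of_nonneg_left (hmD τ hτ) (hgnn τ)
  have hDsum : ∑ τ ∈ Finset.range (t + 1), c ^ (t - τ) * D τ
      ≤ (∑ τ ∈ Finset.range (t + 1), c ^ (t - τ) * d τ)
        + 3 * G * ∑ τ ∈ Finset.range (t + 1), c ^ (t - τ) * e τ := by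
    rw [Finset.mul_sum, ← Finset.sum_add_distrib]
    apply Finset.sum_le_sum
    intro τ _
    have := mul_le_mul_of_nonneg_left (hDd τ) (hgnn τ)
    nlinarith [this]
  have hesum_nn :  3 * G * (∑ τ ∈ Finset.range (t + 1), c ^ (t - τ) * e τ)
      ≤ 3 * G * (C * c ^ t + R * (c ^ t / (c - μ)) + S * S1) :=
    mul_le_mul_of_nonneg_left hB (by linarith)
  have key : m * S1 ≤ c ^ t * V 0 / am + K / am * S1
      + 3 * G * (C * c ^ t + R * (c ^ t / (c - μ)) + S * S1) := by
    linarith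
  -- Final algebra: the RHS of the goal times S1 equals the RHS of `key`
  set T : ℝ := c ^ t / (1 - c ^ (t + 1))
      * ((1 - c) * (V 0 / am + 3 * G * C) + (1 - c) * (3 * G * R) / (c - μ))
      + (K / am + 3 * G * S) with hT
  have hTS1 : c ^ t * V 0 / am + K / am * S1
      + 3 * G * (C * c ^ t + R * (c ^ t / (c - μ)) + S * S1) = T * S1 := by
    rw [hT, hS1eq]
    field_simp
    ring
  rw [hTS1] at key
  exact le_of_mul_le_mul_right key hS1pos
end

section
/- Let c ∈ (0,1), and let a_m > 0, G ≥ 0, K ≥ 0, C ≥ 0, R̄ ≥ 0, S̄ ≥ 0. Let V, d, D, e : ℕ → ℝ be sequences such that: V(t) ≥ 0 and D(t) ≥ 0 for all t; V(t+1) ≤ c·V(t) − a_m·d(t) + K for all t; D(t) ≤ d(t) + 3G·e(t) for all t; e(0) ≤ C; and e(τ) ≤ c^{τ−1} R̄ + S̄ for all τ ≥ 1. Then for every t ≥ 1, min_{0 ≤ τ ≤ t} D(τ) ≤ (c^{t}/(1 − c^{t+1})) · (Q' + t·R₂) + S, where Q' = (1 − c)(V(0)/a_m + 3 G C), R₂ =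 (1 − c)·3 G R̄/c, and S = K/a_m + 3 G S̄. -/
set_option maxHeartbeats 1600000


/-- Theorem 1 of the paper, case c = μ (deterministic content): decay of order
`t·c^t`, up to a constant error `S`, of the running best expected cost gap. -/
theorem main_rate_eq (c : ℝ) (hc : c ∈ Set.Ioo (0 : ℝ) 1)
    (am G K C R S : ℝ) (ham : 0 < am) (hG : 0 ≤ G) (hK : 0 ≤ K)
    (hC : 0 ≤ C) (hR : 0 ≤ R) (hS : 0 ≤ S)
    (V d D e : ℕ → ℝ)
    (hV : ∀ t, 0 ≤ V t) (hD : ∀ t, 0 ≤ D t)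
    (hrec : ∀ t, V (t + 1) ≤ c * V t - am * d t + K)
    (hDd : ∀ t, D t ≤ d t + 3 * G * e t)
    (he0 : e 0 ≤ C) (he : ∀ τ : ℕ, 1 ≤ τ → e τ ≤ c ^ (τ - 1) * R + S)
    (t : ℕ) (ht : 1 ≤ t) :
    (Finset.range (t + 1)).inf' (by simp) D
      ≤ c ^ t / (1 - c ^ (t + 1))
          * ((1 - c) * (V 0 / am + 3 * G * C) + t * ((1 - c) * (3 * G * R) / c))
        + (K / am + 3 * G * S) := by
  obtain ⟨hc0, hc1⟩ := hc
  set W : ℝ := ∑ j ∈ Finset.range (t + 1), c ^ j with hWdef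
  have hWpos : 0 < W := Finset.sum_pos (fun j _ => pow_pos hc0 j) (by simp)
  have hWeq : (1 - c) * W = 1 - c ^ (t + 1) := by
    rw [hWdef, geom_sum_eq (ne_of_lt hc1) (t + 1)]
    have h : c - 1 ≠ 0 := by linarith
    field_simp
    ring
  clear_value W
  have h1c : (0:ℝ) < 1 - c ^ (t + 1) := by
    have : c ^ (t + 1) < 1 := pow_lt_one₀ hc0.le hc1 (Nat.succ_ne_zero t)
    linarith
  set m : ℝ := (Finset.range (t + 1)).inf' (by simp) D with hm
  have hrefl : ∀ g : ℕ → ℝ, ∑ τ ∈ Finset.range (t + 1), g (t - τ)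
      = ∑ j ∈ Finset.range (t + 1), g j := by
    intro g
    have := Finset.sum_range_reflect g (t + 1)
    simpa using this
  -- Step 1: m * W ≤ weighted sum of D
  have hsum1 : m * W ≤ ∑ τ ∈ Finset.range (t + 1), c ^ (t - τ) * D τ := by
    have hmw : m * W = ∑ τ ∈ Finset.range (t + 1), c ^ (t - τ) * m := by
      rw [hrefl (fun j => c ^ j * m), hWdef, Finset.mul_sum]
      exact Finset.sum_congr rfl fun _ _ => mul_comm _ _
    rw [hmw]
    refine Finset.sum_le_sum (fun τ hτ => ?_)
    exact mul_le_mul_of_nonneg_left (Finset.inf'_le _ hτ) (pow_nonneg hc0.le _)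
  -- Step 2: weighted sum of D ≤ weighted sum of d + 3G * weighted sum of e
  have hsum2 : ∑ τ ∈ Finset.range (t + 1), c ^ (t - τ) * D τ
      ≤ (∑ τ ∈ Finset.range (t + 1), c ^ (t - τ) * d τ)
        + 3 * G * ∑ τ ∈ Finset.range (t + 1), c ^ (t - τ) * e τ := by
    rw [Finset.mul_sum, ← Finset.sum_add_distrib]
    refine Finset.sum_le_sum (fun τ hτ => ?_)
    have := mul_le_mul_of_nonneg_left (hDd τ) (pow_nonneg hc0.le (t - τ))
    nlinarith [this]
  -- Step 3: telescoping bound on weighted sum of d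
  have hsum3 : am * ∑ τ ∈ Finset.range (t + 1), c ^ (t - τ) * d τ
      ≤ c ^ (t + 1) * V 0 + K * W := by
    have key : ∀ τ ∈ Finset.range (t + 1),
        c ^ (t - τ) * (am * d τ)
          ≤ (c ^ (t + 1 - τ) * V τ - c ^ (t + 1 - (τ + 1)) * V (τ + 1))
            + c ^ (t - τ) * K := by
      intro τ hτ
      have hτt : τ ≤ t := Nat.lt_succ_iff.mp (Finset.mem_range.mp hτ)
      have h1 : c ^ (t - τ) * c = c ^ (t + 1 - τ) := by
        rw [← pow_succ]
        congr 1
        omega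
      have h2 : t + 1 - (τ + 1) = t - τ := by omega
      have hmd : am * d τ ≤ c * V τ - V (τ + 1) + K := by
        have := hrec τ; linarith
      have := mul_le_mul_of_nonneg_left hmd (pow_nonneg hc0.le (t - τ))
      rw [h2, ← h1]
      nlinarith [this]
    calc am * ∑ τ ∈ Finset.range (t + 1), c ^ (t - τ) * d τ
        = ∑ τ ∈ Finset.range (t + 1), c ^ (t - τ) * (am * d τ) := by
          rw [Finset.mul_sum]; exact Finset.sum_congr rfl (fun τ _ => by ring)
      _ ≤ ∑ τ ∈ Finset.range (t + 1),
            ((c ^ (t + 1 - τ) * V τ - c ^ (t + 1 - (τ + 1)) * V (τ + 1))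
              + c ^ (t - τ) * K) := Finset.sum_le_sum key
      _ = (c ^ (t + 1 - 0) * V 0 - c ^ (t + 1 - (t + 1)) * V (t + 1)) + W * K := by
          rw [Finset.sum_add_distrib,
            Finset.sum_range_sub' (fun i => c ^ (t + 1 - i) * V i) (t + 1)]
          congr 1
          rw [hWdef, ← hrefl (fun j => c ^ j), Finset.sum_mul]
      _ ≤ c ^ (t + 1) * V 0 + K * W := by
          simp only [Nat.sub_zero, Nat.sub_self, pow_zero, one_mul]
          nlinarith [hV (t + 1)]
  -- Step 4: bound on weighted sum of e
  have hsum4 : ∑ τ ∈ Finset.range (t + 1), c ^ (t - τ) * e τ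
      ≤ c ^ t * C + t * c ^ (t - 1) * R + S * W := by
    rw [Finset.sum_range_succ' (fun τ => c ^ (t - τ) * e τ) t]
    have h0 : c ^ (t - 0) * e 0 ≤ c ^ t * C := by
      simpa using mul_le_mul_of_nonneg_left he0 (pow_nonneg hc0.le t)
    have hmain : ∑ i ∈ Finset.range t, c ^ (t - (i + 1)) * e (i + 1)
        ≤ t * c ^ (t - 1) * R + S * W := by
      have step : ∀ i ∈ Finset.range t, c ^ (t - (i + 1)) * e (i + 1)
          ≤ c ^ (t - 1) * R + c ^ (t - 1 - i) * S := by
        intro i hi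
        have hit : i < t := Finset.mem_range.mp hi
        have h1 : t - (i + 1) = t - 1 - i := by omega
        have he' : e (i + 1) ≤ c ^ i * R + S := by
          simpa using he (i + 1) (Nat.le_add_left 1 i)
        have h2 : c ^ (t - 1 - i) * c ^ i = c ^ (t - 1) := by
          rw [← pow_add]; congr 1; omega
        have := mul_le_mul_of_nonneg_left he' (pow_nonneg hc0.le (t - 1 - i))
        rw [h1]
        nlinarith [this]
      calc ∑ i ∈ Finset.range t, c ^ (t - (i + 1)) * e (i + 1)
          ≤ ∑ i ∈ Finset.range t, (c ^ (t - 1) * R + c ^ (t - 1 - i) * S) :=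
            Finset.sum_le_sum step
        _ = t * c ^ (t - 1) * R + (∑ i ∈ Finset.range t, c ^ (t - 1 - i)) * S := by
            rw [Finset.sum_add_distrib, Finset.sum_const, ← Finset.sum_mul]
            simp; ring
        _ ≤ t * c ^ (t - 1) * R + S * W := by
            have hsub : ∑ i ∈ Finset.range t, c ^ (t - 1 - i)
                = ∑ j ∈ Finset.range t, c ^ j := by
              have := Finset.sum_range_reflect (fun j => c ^ j) t
              simpa using this
            have hle : ∑ j ∈ Finset.range t, c ^ j ≤ W := by
              rw [hWdef, Finset.sum_range_succ]
              nlinarith [pow_nonneg hc0.le t]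
            have hnn : (0:ℝ) ≤ ∑ j ∈ Finset.range t, c ^ j :=
              Finset.sum_nonneg (fun j _ => pow_nonneg hc0.le j)
            rw [hsub]
            nlinarith
    linarith
  -- Combine everything: m * W ≤ ...
  have hd : ∑ τ ∈ Finset.range (t + 1), c ^ (t - τ) * d τ
      ≤ (c ^ (t + 1) * V 0 + K * W) / am := by
    rw [le_div_iff₀ ham]
    nlinarith [hsum3]
  have hcomb : m * W ≤ (c ^ (t + 1) * V 0 + K * W) / am
      + 3 * G * (c ^ t * C + t * c ^ (t - 1) * R + S * W) := by
    have h3G : 3 * G * (∑ τ ∈ Finset.range (t + 1), c ^ (t - τ) * e τ)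
        ≤ 3 * G * (c ^ t * C + t * c ^ (t - 1) * R + S * W) :=
      mul_le_mul_of_nonneg_left hsum4 (by linarith)
    linarith [hsum1, hsum2]
  -- Final: compare with target
  have hct1 : c ^ (t - 1) * c = c ^ t := by
    rw [← pow_succ]; congr 1; omega
  set p := c ^ t with hp
  set q := c ^ (t + 1) with hqdef
  have hq : q = c * p := by rw [hqdef, hp]; ring
  have hppos : 0 < p := pow_pos hc0 t
  have hcne : c ≠ 0 := ne_of_gt hc0
  clear_value p q
  clear_value m
  have hpc : c ^ (t - 1) = p / c := by
    rw [eq_div_iff hcne]; exact hct1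
  have hRterm : (t : ℝ) * ((1 - c) * (3 * G * R) / c) * p
      = (1 - c) * (3 * G * ((t : ℝ) * c ^ (t - 1) * R)) := by
    rw [hpc]; field_simp
  have hexp : (q * V 0 + K * W) / am = q * (V 0 / am) + K / am * W := by
    field_simp
  have hmain : m * ((1 - c) * W)
      ≤ p * ((1 - c) * (V 0 / am + 3 * G * C) + t * ((1 - c) * (3 * G * R) / c))
        + (K / am + 3 * G * S) * ((1 - c) * W) := by
    rw [hexp] at hcomb
    have h1 : (1 - c) * (m * W)
        ≤ (1 - c) * (q * (V 0 / am) + K / am * W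
            + 3 * G * (p * C + t * c ^ (t - 1) * R + S * W)) :=
      mul_le_mul_of_nonneg_left hcomb (by linarith)
    have hqle : (1 - c) * (q * (V 0 / am)) ≤ (1 - c) * (p * (V 0 / am)) := by
      have hV0 : 0 ≤ V 0 / am := div_nonneg (hV 0) ham.le
      rw [hq]
      nlinarith [mul_nonneg (mul_nonneg (mul_nonneg (sub_nonneg.mpr hc1.le)
        (sub_nonneg.mpr hc1.le)) hppos.le) hV0]
    nlinarith [h1, hqle, hRterm]
  rw [hWeq] at hmain
  have hgoal : p / (1 - q)
        * ((1 - c) * (V 0 / am + 3 * G * C) + t * ((1 - c) * (3 * G * R) / c))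
      + (K / am + 3 * G * S)
      = (p * ((1 - c) * (V 0 / am + 3 * G * C) + t * ((1 - c) * (3 * G * R) / c))
          + (K / am + 3 * G * S) * (1 - q)) / (1 - q) := by
    field_simp
  show m ≤ _
  rw [hgoal, le_div_iff₀ h1c]
  exact hmain
end
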